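/- arXiv:0911.3060 — 6 statements merged into one kernel-verified Lean document; each statement's English description precedes it below -/
import Mathlib

section
/- Let p be an odd prime, a a positive integer, and m an integer not divisible by p. Then ∑_{k=0}^{(p^a−1)/2} C_k/m^k ≡ ((4−m)/2)·∑_{k=0}^{(p^a−1)/2} C(2k,k)/m^k + m/2 − 2p·δ_{a,1}·(−m/p) (mod p^2), where δ_{a,1} equals 1 if a = 1 and 0 otherwise, and where the congruence is between rational numbers whose denominators are coprime to p (i.e., it holds in the localization ℤ_(p)). -/
/-!
Telescoping with `(n + 2) C_{n+1} = 2 (2n + 1) C_n` gives the exact identity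
`∑_{k ≤ n} C_k / m^k = (4 - m)/2 · ∑_{k ≤ n} C(2k,k) / m^k + m/2 - (2n + 1) C_n / m^n`.
For `n = (p^a - 1)/2` the last term is `p^a C_n / m^n`, which vanishes mod `p^2` when `a ≥ 2`.
When `a = 1`, `C(p-1, n) ≡ (-1)^n` and `2 (n + 1) ≡ 1` give `C_n ≡ 2 (-1)^n (mod p)`, and Euler's
criterion `(-m/p) ≡ (-m)^n` together with `m^(2n) ≡ 1` turns this into `C_n ≡ 2 (-m/p) m^n`.
-/

/-- `x ≡ y (mod p^n)` as rational numbers, i.e. in the localization `ℤ_(p)`. -/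
def ratModCast (p n : ℕ) (x y : ℚ) : Prop :=
  ∃ z : ℚ, x - y = (p : ℚ) ^ n * z ∧ ¬ (p ∣ z.den)

lemma ratModCast_of_sub_eq_mul_div {p n : ℕ} {x y : ℚ} {u v : ℤ} (hv : ¬ (p : ℤ) ∣ v)
    (h : x - y = (p : ℚ) ^ n * (u / v)) : ratModCast p n x y :=
  ⟨u / v, h, fun hden => hv <| (Int.natCast_dvd_natCast.2 hden).trans <| by
    simpa [Rat.divInt_eq_div] using Rat.den_dvd u v⟩

lemma succ_succ_mul_catalan_succ (n : ℕ) :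
    (n + 2) * catalan (n + 1) = 2 * (2 * n + 1) * catalan n := by
  apply Nat.eq_of_mul_eq_mul_left n.succ_pos
  calc (n + 1) * ((n + 2) * catalan (n + 1)) = (n + 1) * (n + 1).centralBinom := by
        rw [← succ_mul_catalan_eq_centralBinom]
    _ = 2 * (2 * n + 1) * n.centralBinom := Nat.succ_mul_centralBinom_succ n
    _ = (n + 1) * (2 * (2 * n + 1) * catalan n) := by
        rw [← succ_mul_catalan_eq_centralBinom]
        ring

lemma sum_catalan_div_pow_eq {K : Type*} [Field K] (h2 : (2 : K) ≠ 0) {m : K} (hm : m ≠ 0)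
    (n : ℕ) :
    ∑ k ∈ Finset.range (n + 1), (catalan k : K) / m ^ k
      = (4 - m) / 2 * ∑ k ∈ Finset.range (n + 1), ((2 * k).choose k : K) / m ^ k
        + m / 2 - (2 * n + 1 : K) * catalan n / m ^ n := by
  induction n with
  | zero => field_simp; norm_num
  | succ n ih =>
    have hbinom : ((2 * (n + 1)).choose (n + 1) : K) = (n + 2) * catalan (n + 1) := by
      rw [← Nat.centralBinom_eq_two_mul_choose, ← succ_mul_catalan_eq_centralBinom]
      push_cast
      ring
    have hrec : (n + 2 : K) * catalan (n + 1) = 2 * (2 * n + 1) * catalan n := by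
      exact_mod_cast congrArg (Nat.cast (R := K)) (succ_succ_mul_catalan_succ n)
    rw [Finset.sum_range_succ, Finset.sum_range_succ (fun k => ((2 * k).choose k : K) / m ^ k),
      ih, hbinom]
    field_simp
    push_cast
    linear_combination m ^ (n + 1) * hrec

lemma ZMod.choose_pred_eq_neg_one_pow {p k : ℕ} [Fact p.Prime] (hk : k < p) :
    ((p - 1).choose k : ZMod p) = (-1) ^ k := by
  induction k with
  | zero => simp
  | succ k ih =>
    have hpascal := Nat.choose_succ_succ' (p - 1) k
    rw [Nat.sub_add_cancel (Fact.out : p.Prime).one_le] at hpascal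
    have hzero : (p.choose (k + 1) : ZMod p) = 0 :=
      (ZMod.natCast_eq_zero_iff _ _).2 ((Fact.out : p.Prime).dvd_choose_self k.succ_ne_zero hk)
    rw [hpascal, Nat.cast_add, ih (by omega)] at hzero
    linear_combination hzero

lemma ZMod.catalan_eq_two_mul_neg_one_pow {p n : ℕ} [Fact p.Prime] (hp : 2 * n + 1 = p) :
    (catalan n : ZMod p) = 2 * (-1) ^ n := by
  have hbinom : ((n + 1) * catalan n : ZMod p) = (-1) ^ n := by
    rw [← ZMod.choose_pred_eq_neg_one_pow (show n < p by omega), show p - 1 = 2 * n by omega,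
      ← Nat.centralBinom_eq_two_mul_choose, ← succ_mul_catalan_eq_centralBinom]
    push_cast
    ring
  have hzero : ((2 * n + 1 : ℕ) : ZMod p) = 0 := by
    rw [hp, ZMod.natCast_self]
  push_cast at hzero
  linear_combination 2 * hbinom - (catalan n : ZMod p) * hzero

lemma dvd_catalan_sub_two_mul_jacobiSym_mul_pow {p n : ℕ} [Fact p.Prime] (hp : 2 * n + 1 = p)
    {m : ℤ} (hm : ¬ (p : ℤ) ∣ m) :
    (p : ℤ) ∣ catalan n - 2 * jacobiSym (-m) p * m ^ n := by
  rw [← ZMod.intCast_zmod_eq_zero_iff_dvd]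
  have heuler : (jacobiSym (-m) p : ZMod p) = (-m) ^ n := by
    rw [← jacobiSym.legendreSym.to_jacobiSym, legendreSym.eq_pow, Int.cast_neg,
      show p / 2 = n by omega]
  have hfermat : (m : ZMod p) ^ (2 * n) = 1 := by
    rw [show 2 * n = p - 1 by omega]
    exact ZMod.pow_card_sub_one_eq_one (by rwa [Ne, ZMod.intCast_zmod_eq_zero_iff_dvd])
  push_cast
  rw [ZMod.catalan_eq_two_mul_neg_one_pow hp, heuler, neg_pow]
  linear_combination -2 * (-1 : ZMod p) ^ n * hfermat

theorem sum_catalan_div_m (p : ℕ) (hp : p.Prime) (hp2 : p ≠ 2)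
    (a : ℕ) (ha : 0 < a) (m : ℤ) (hm : ¬ ((p : ℤ) ∣ m)) :
    ratModCast p 2
      (∑ k ∈ Finset.range ((p ^ a - 1) / 2 + 1),
        (catalan k : ℚ) / (m : ℚ) ^ k)
      ((4 - (m : ℚ)) / 2 *
          ∑ k ∈ Finset.range ((p ^ a - 1) / 2 + 1),
            (Nat.choose (2 * k) k : ℚ) / (m : ℚ) ^ k
        + (m : ℚ) / 2
        - 2 * p * (if a = 1 then (1 : ℚ) else 0) * (jacobiSym (-m) p : ℚ)) := by
  have := Fact.mk hp
  set n := (p ^ a - 1) / 2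
  have hn : 2 * n + 1 = p ^ a := by
    obtain ⟨t, ht⟩ := (hp.odd_of_ne_two hp2).pow (n := a)
    omega
  have hmQ : (m : ℚ) ≠ 0 := Int.cast_ne_zero.2 (by rintro rfl; exact hm (dvd_zero _))
  have hpm : ¬ (p : ℤ) ∣ m ^ n := fun h => hm (Int.Prime.dvd_pow' hp h)
  rw [sum_catalan_div_pow_eq two_ne_zero hmQ, show (2 * n + 1 : ℚ) = p ^ a by exact_mod_cast hn]
  rcases eq_or_ne a 1 with rfl | ha1
  · obtain ⟨K, hK⟩ := dvd_catalan_sub_two_mul_jacobiSym_mul_pow (hn.trans (pow_one p)) hm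
    refine ratModCast_of_sub_eq_mul_div (u := -K) hpm ?_
    have hKQ := congrArg (Int.cast (R := ℚ)) hK
    push_cast at hKQ ⊢
    field_simp
    linear_combination -2 * (p : ℚ) * hKQ
  · refine ratModCast_of_sub_eq_mul_div (u := -(p ^ (a - 2) * catalan n)) hpm ?_
    rw [if_neg ha1, ← Nat.sub_add_cancel (show 2 ≤ a by omega), pow_add]
    push_cast
    field_simp
    ring
end

section
/- Let p be an odd prime, a a positive integer, and k an integer with 0 ≤ k ≤ (p^a−1)/2. Then C((p^a−1)/2 + k, 2k) − C(2k,k)/(−16)^k ≡ (−1)^{k−1}·(−1/p^a)·C(p^a−1−2k, (p^a−1)/2−k)·∑_{j=1}^{k} p^{2a}/(2j−1)^2 (mod p^3), where the congruence is between rational numbers whose denominators are coprime to p (i.e., it holds in the localization ℤ_(p)). -/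
open Finset

theorem Nat.cast_choose_succ_mul {R : Type*} [CommRing R] (n j : ℕ) :
    (n.choose (j + 1) : R) * (j + 1) = n.choose j * (n - j) := by
  rcases le_or_gt j n with h | h
  · exact_mod_cast congrArg (Nat.cast : ℕ → R) (Nat.choose_succ_right_eq n j) |>.trans
      (by push_cast [h]; ring)
  · simp [Nat.choose_eq_zero_of_lt h, Nat.choose_eq_zero_of_lt (h.trans (Nat.lt_succ_self j))]

theorem Nat.cast_succ_mul_centralBinom_succ {R : Type*} [CommRing R] (t : ℕ) :
    (t + 1 : R) * (2 * (t + 1)).choose (t + 1) = 2 * (2 * t + 1) * (2 * t).choose t := by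
  have h := Nat.succ_mul_centralBinom_succ t
  simp only [Nat.centralBinom_eq_two_mul_choose] at h
  exact_mod_cast congrArg (Nat.cast : ℕ → R) h

section ProductFormulas

variable {K : Type*} [Field K] [CharZero K]

theorem two_mul_natCast_add_one_ne_zero (i : ℕ) : (2 * i + 1 : K) ≠ 0 := by
  exact_mod_cast (2 * i).succ_ne_zero

theorem neg_four_pow_mul_choose_eq_prod (m t : ℕ) :
    (-4 : K) ^ t * m.choose t =
      (2 * t).choose t * ∏ i ∈ range t, (1 - (2 * m + 1 : K) / (2 * i + 1)) := by
  induction t with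
  | zero => simp
  | succ t ih =>
    set P := ∏ i ∈ range t, (1 - (2 * m + 1 : K) / (2 * i + 1))
    have hq : (2 * t + 1 : K) * (1 - (2 * m + 1) / (2 * t + 1)) = 2 * t + 1 - (2 * m + 1) := by
      rw [mul_sub, mul_one, mul_div_cancel₀ _ (two_mul_natCast_add_one_ne_zero t)]
    rw [prod_range_succ, ← mul_right_inj' (a := (t + 1 : K)) (by exact_mod_cast t.succ_ne_zero)]
    linear_combination (-4 : K) ^ (t + 1) * Nat.cast_choose_succ_mul (R := K) m t
      - 4 * (m - t) * ih
      - P * (1 - (2 * m + 1) / (2 * t + 1)) * Nat.cast_succ_mul_centralBinom_succ (R := K) t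
      - 2 * (2 * t).choose t * P * hq

theorem choose_add_two_mul_eq_prod (m k : ℕ) :
    ((m + k).choose (2 * k) : K) =
      (2 * k).choose k / (-16) ^ k * ∏ i ∈ range k, (1 - ((2 * m + 1 : K) / (2 * i + 1)) ^ 2) := by
  induction k with
  | zero => simp
  | succ k ih =>
    set P := ∏ i ∈ range k, (1 - ((2 * m + 1 : K) / (2 * i + 1)) ^ 2)
    set R := 1 - ((2 * m + 1 : K) / (2 * k + 1)) ^ 2 with hR
    have hq : (2 * k + 1 : K) ^ 2 * R = (2 * k + 1) ^ 2 - (2 * m + 1) ^ 2 := by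
      rw [hR, div_pow, mul_sub, mul_one,
        mul_div_cancel₀ _ (pow_ne_zero 2 (two_mul_natCast_add_one_ne_zero k))]
    have h1 := Nat.cast_choose_succ_mul (R := K) (m + k + 1) (2 * k + 1)
    have h2 : ((m + k + 1 : ℕ) : K) * (m + k).choose (2 * k)
        = (m + k + 1).choose (2 * k + 1) * (2 * k + 1) := by
      exact_mod_cast congrArg (Nat.cast : ℕ → K) (Nat.add_one_mul_choose_eq (m + k) (2 * k))
    have h3 := Nat.cast_succ_mul_centralBinom_succ (R := K) k
    have hk : (2 * k + 2 : K) * (2 * k + 1) ≠ 0 := by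
      exact_mod_cast Nat.mul_ne_zero (2 * k + 1).succ_ne_zero (2 * k).succ_ne_zero
    rw [show 2 * (k + 1) = 2 * k + 1 + 1 by ring] at h3 ⊢
    rw [show m + (k + 1) = m + k + 1 by ring, prod_range_succ, ← mul_right_inj' hk]
    push_cast at *
    linear_combination (2 * k + 1 : K) * h1 - (m - k : K) * h2 + (m - k) * (m + k + 1 : K) * ih
      - 2 * (2 * k + 1) / (-16) ^ (k + 1) * P * R * h3
      - 4 * (2 * k).choose k / (-16) ^ (k + 1) * P * hq

end ProductFormulas

namespace IsUltrametricDist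

theorem norm_sub_le_of_le {G : Type*} [SeminormedAddGroup G] [IsUltrametricDist G] {a b : G}
    {r : ℝ} (ha : ‖a‖ ≤ r) (hb : ‖b‖ ≤ r) : ‖a - b‖ ≤ r := by
  rw [sub_eq_add_neg]
  exact (norm_add_le_max a (-b)).trans (max_le ha (by rwa [norm_neg]))

variable {R ι : Type*} [NormedCommRing R] [NormOneClass R] [IsUltrametricDist R]

theorem norm_prod_one_sub_sub_one_le (s : Finset ι) {x : ι → R} {r : ℝ} (hr₀ : 0 ≤ r)
    (hr₁ : r ≤ 1) (hx : ∀ i ∈ s, ‖x i‖ ≤ r) : ‖∏ i ∈ s, (1 - x i) - 1‖ ≤ r := by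
  classical
  induction s using Finset.induction_on with
  | empty => simpa using hr₀
  | insert a s ha ih =>
    set P := ∏ i ∈ s, (1 - x i)
    have hP : ‖P - 1‖ ≤ r := ih fun i hi ↦ hx i (mem_insert_of_mem hi)
    have hP₁ : ‖P‖ ≤ 1 := by
      simpa using (norm_add_one_le_max_norm_one (P - 1)).trans (max_le (hP.trans hr₁) le_rfl)
    rw [prod_insert ha, show (1 - x a) * P - 1 = (P - 1) - x a * P by ring]
    refine norm_sub_le_of_le hP ((norm_mul_le _ _).trans ?_)
    simpa using mul_le_mul (hx a (mem_insert_self a s)) hP₁ (norm_nonneg _) hr₀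

theorem norm_prod_one_sub_sub_one_add_sum_le (s : Finset ι) {x : ι → R} {r : ℝ} (hr₀ : 0 ≤ r)
    (hr₁ : r ≤ 1) (hx : ∀ i ∈ s, ‖x i‖ ≤ r) :
    ‖∏ i ∈ s, (1 - x i) - 1 + ∑ i ∈ s, x i‖ ≤ r ^ 2 := by
  classical
  induction s using Finset.induction_on with
  | empty => simpa using sq_nonneg r
  | insert a s ha ih =>
    have hs : ∀ i ∈ s, ‖x i‖ ≤ r := fun i hi ↦ hx i (mem_insert_of_mem hi)
    rw [prod_insert ha, sum_insert ha,
      show (1 - x a) * ∏ i ∈ s, (1 - x i) - 1 + (x a + ∑ i ∈ s, x i)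
        = (∏ i ∈ s, (1 - x i) - 1 + ∑ i ∈ s, x i) - x a * (∏ i ∈ s, (1 - x i) - 1) by ring]
    refine norm_sub_le_of_le (ih hs) ((norm_mul_le _ _).trans ?_)
    rw [sq]
    exact mul_le_mul (hx a (mem_insert_self a s)) (norm_prod_one_sub_sub_one_le s hr₀ hr₁ hs)
      (norm_nonneg _) hr₀

end IsUltrametricDist

namespace Padic

variable {p : ℕ} [hp : Fact p.Prime]

theorem norm_two (hp2 : p ≠ 2) : ‖(2 : ℚ_[p])‖ = 1 := by
  exact_mod_cast norm_natCast_eq_one_iff.2 ((Nat.coprime_primes hp.out Nat.prime_two).2 hp2)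

theorem norm_four (hp2 : p ≠ 2) : ‖(4 : ℚ_[p])‖ = 1 := by
  rw [show (4 : ℚ_[p]) = 2 ^ 2 by norm_num, norm_pow, norm_two hp2, one_pow]

theorem inv_prime_le_one : (p : ℝ)⁻¹ ≤ 1 :=
  inv_le_one_of_one_le₀ (by exact_mod_cast hp.out.one_le)

theorem norm_pow_div_natCast_le {a j : ℕ} (hj₀ : j ≠ 0) (hj : j < p ^ a) :
    ‖(p : ℚ_[p]) ^ a / j‖ ≤ (p : ℝ)⁻¹ := by
  obtain ⟨e, u, hu, rfl⟩ := Nat.exists_eq_pow_mul_and_not_dvd hj₀ p hp.out.ne_one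
  have hea : e < a := (Nat.pow_lt_pow_iff_right hp.out.one_lt).1
    ((Nat.le_mul_of_pos_right _ (Nat.pos_of_ne_zero (right_ne_zero_of_mul hj₀))).trans_lt hj)
  have hu₁ : ‖(u : ℚ_[p])‖ = 1 :=
    norm_natCast_eq_one_iff.2 ((Nat.Prime.coprime_iff_not_dvd hp.out).2 hu)
  have hp₀ : (p : ℝ)⁻¹ ≠ 0 := inv_ne_zero (by exact_mod_cast hp.out.ne_zero)
  push_cast
  rw [norm_div, norm_mul, hu₁, mul_one, norm_pow, norm_pow, norm_p, div_eq_mul_inv,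
    ← pow_sub₀ _ hp₀ hea.le]
  exact pow_le_of_le_one (by positivity) inv_prime_le_one (Nat.sub_ne_zero_of_lt hea)

theorem norm_two_mul_add_one_div_le {a m i : ℕ} (hm : 2 * m + 1 = p ^ a) (hi : i < m) :
    ‖(2 * m + 1 : ℚ_[p]) / (2 * i + 1)‖ ≤ (p : ℝ)⁻¹ := by
  have hcast : (2 * m + 1 : ℚ_[p]) = p ^ a := by exact_mod_cast hm
  rw [hcast, show (2 * i + 1 : ℚ_[p]) = ((2 * i + 1 : ℕ) : ℚ_[p]) by push_cast; ring]
  exact norm_pow_div_natCast_le (2 * i).succ_ne_zero (by omega)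

theorem norm_one_sub_four_pow_le (hp2 : p ≠ 2) {a m : ℕ} (hm : 2 * m + 1 = p ^ a) :
    ‖(1 : ℚ_[p]) - 4 ^ m‖ ≤ (p : ℝ)⁻¹ := by
  have hfermat : (2 : ℤ) ^ (p - 1) ≡ 1 [ZMOD p] :=
    Int.ModEq.pow_card_sub_one_eq_one hp.out (Int.isCoprime_iff_gcd_eq_one.2
      (by exact_mod_cast (Nat.coprime_primes Nat.prime_two hp.out).2 (Ne.symm hp2)))
  obtain ⟨e, he⟩ : p - 1 ∣ 2 * m := by
    rw [show 2 * m = p ^ a - 1 by omega]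
    exact Nat.sub_one_dvd_pow_sub_one p a
  have h4 : (4 : ℤ) ^ m ≡ 1 [ZMOD p] :=
    calc (4 : ℤ) ^ m = (2 ^ (p - 1)) ^ e := by rw [← pow_mul, ← he, pow_mul]; norm_num
      _ ≡ 1 ^ e [ZMOD p] := hfermat.pow e
      _ = 1 := one_pow e
  simpa using (norm_int_le_pow_iff_dvd (p := p) (1 - 4 ^ m) 1).2 (by simpa using h4.dvd)

theorem norm_choose_two_mul_sub_neg_four_pow_mul_choose_le {a m t : ℕ} (hm : 2 * m + 1 = p ^ a)
    (ht : t ≤ m) : ‖((2 * t).choose t : ℚ_[p]) - (-4) ^ t * m.choose t‖ ≤ (p : ℝ)⁻¹ := by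
  have hy : ∀ i ∈ range t, ‖(2 * m + 1 : ℚ_[p]) / (2 * i + 1)‖ ≤ (p : ℝ)⁻¹ := fun i hi ↦
    norm_two_mul_add_one_div_le hm ((mem_range.1 hi).trans_le ht)
  rw [neg_four_pow_mul_choose_eq_prod, ← mul_one_sub, norm_mul, norm_sub_rev,
    ← one_mul (p : ℝ)⁻¹]
  exact mul_le_mul (IsUltrametricDist.norm_natCast_le_one ℚ_[p] _)
    (IsUltrametricDist.norm_prod_one_sub_sub_one_le _ (by positivity) inv_prime_le_one hy)
    (norm_nonneg _) zero_le_one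

theorem norm_choose_two_mul_sub_sixteen_pow_mul_le (hp2 : p ≠ 2) {a m k : ℕ}
    (hm : 2 * m + 1 = p ^ a) (hk : k ≤ m) :
    ‖((2 * k).choose k : ℚ_[p]) - 16 ^ k * (-1) ^ m * (2 * (m - k)).choose (m - k)‖
      ≤ (p : ℝ)⁻¹ := by
  obtain ⟨d, rfl⟩ := Nat.exists_eq_add_of_le hk
  have hC := norm_choose_two_mul_sub_neg_four_pow_mul_choose_le hm hk
  have hY := norm_choose_two_mul_sub_neg_four_pow_mul_choose_le hm (Nat.le_add_left d k)
  rw [← Nat.choose_symm_add] at hY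
  rw [Nat.add_sub_cancel_left]
  set L := ((k + d).choose k : ℚ_[p])
  have h16 : (16 : ℚ_[p]) ^ k = 4 ^ k * 4 ^ k := by rw [← mul_pow]; norm_num
  have hsq : ((-1 : ℚ_[p]) ^ d) ^ 2 = 1 := by rw [← pow_mul, mul_comm, pow_mul]; norm_num
  have key : ((2 * k).choose k : ℚ_[p]) - 16 ^ k * (-1) ^ (k + d) * (2 * d).choose d
      = (((2 * k).choose k - (-4) ^ k * L)
        - (-1) ^ (k + d) * 16 ^ k * ((2 * d).choose d - (-4) ^ d * L))
        + (-4) ^ k * L * (1 - 4 ^ (k + d)) := by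
    rw [h16, neg_pow (4 : ℚ_[p]), neg_pow (4 : ℚ_[p])]
    linear_combination (-(L * 4 ^ d * (-1) ^ k * 4 ^ k * 4 ^ k)) * hsq
  rw [key]
  refine (IsUltrametricDist.norm_add_le_max _ _).trans (max_le ?_ ?_)
  · refine IsUltrametricDist.norm_sub_le_of_le hC ?_
    simpa [norm_four hp2, show (16 : ℚ_[p]) = 4 ^ 2 by norm_num] using hY
  · rw [norm_mul, norm_mul, norm_pow, norm_neg, norm_four hp2, one_pow, one_mul,
      ← one_mul (p : ℝ)⁻¹]
    exact mul_le_mul (IsUltrametricDist.norm_natCast_le_one ℚ_[p] _)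
      (norm_one_sub_four_pow_le hp2 hm) (norm_nonneg _) zero_le_one

theorem norm_choose_add_two_mul_sub_le (hp2 : p ≠ 2) {a m k : ℕ} (hm : 2 * m + 1 = p ^ a)
    (hk : k ≤ m) :
    ‖((m + k).choose (2 * k) : ℚ_[p]) - (2 * k).choose k / (-16) ^ k
      + (-1) ^ k * (-1) ^ m * (2 * (m - k)).choose (m - k)
        * ∑ i ∈ range k, ((2 * m + 1 : ℚ_[p]) / (2 * i + 1)) ^ 2‖ ≤ (p : ℝ)⁻¹ ^ 3 := by
  have hp₀ : 0 ≤ (p : ℝ)⁻¹ := by positivity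
  have hy : ∀ i ∈ range k, ‖((2 * m + 1 : ℚ_[p]) / (2 * i + 1)) ^ 2‖ ≤ (p : ℝ)⁻¹ ^ 2 :=
    fun i hi ↦ by
      rw [norm_pow]
      exact pow_le_pow_left₀ (norm_nonneg _)
        (norm_two_mul_add_one_div_le hm ((mem_range.1 hi).trans_le hk)) 2
  have h16 : ‖(-16 : ℚ_[p]) ^ k‖ = 1 := by
    rw [norm_pow, norm_neg, show (16 : ℚ_[p]) = 4 ^ 2 by norm_num, norm_pow, norm_four hp2]
    simp
  rw [choose_add_two_mul_eq_prod]
  set C := ((2 * k).choose k : ℚ_[p])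
  set Y := ((2 * (m - k)).choose (m - k) : ℚ_[p])
  set P := ∏ i ∈ range k, (1 - ((2 * m + 1 : ℚ_[p]) / (2 * i + 1)) ^ 2)
  set S := ∑ i ∈ range k, ((2 * m + 1 : ℚ_[p]) / (2 * i + 1)) ^ 2
  have key : C / (-16) ^ k * P - C / (-16) ^ k + (-1) ^ k * (-1) ^ m * Y * S
      = C / (-16) ^ k * (P - 1 + S) - S * (C - 16 ^ k * (-1) ^ m * Y) / (-16) ^ k := by
    have hsq : ((-1 : ℚ_[p]) ^ k) ^ 2 = 1 := by rw [← pow_mul, mul_comm, pow_mul]; norm_num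
    rw [neg_pow (16 : ℚ_[p])]
    field_simp
    linear_combination S * (-1) ^ m * Y * 16 ^ k * hsq
  rw [key]
  refine IsUltrametricDist.norm_sub_le_of_le ?_ ?_
  · rw [norm_mul, norm_div, h16, div_one]
    calc ‖C‖ * ‖P - 1 + S‖ ≤ 1 * ((p : ℝ)⁻¹ ^ 2) ^ 2 :=
          mul_le_mul (IsUltrametricDist.norm_natCast_le_one ℚ_[p] _)
            (IsUltrametricDist.norm_prod_one_sub_sub_one_add_sum_le _ (by positivity)
              (pow_le_one₀ hp₀ inv_prime_le_one) hy) (norm_nonneg _) zero_le_one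
      _ ≤ (p : ℝ)⁻¹ ^ 3 := by
          rw [one_mul, ← pow_mul]
          exact pow_le_pow_of_le_one hp₀ inv_prime_le_one (by norm_num)
  · rw [norm_div, h16, div_one, norm_mul, pow_succ]
    exact mul_le_mul (IsUltrametricDist.norm_sum_le_of_forall_le_of_nonneg (by positivity) hy)
      (norm_choose_two_mul_sub_sixteen_pow_mul_le hp2 hm hk) (norm_nonneg _) (by positivity)

end Padic

theorem ratModCast_of_norm_le {p n : ℕ} [hp : Fact p.Prime] {x y : ℚ}
    (h : ‖((x - y : ℚ) : ℚ_[p])‖ ≤ (p : ℝ)⁻¹ ^ n) : ratModCast p n x y := by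
  have hp₀ : (p : ℚ) ≠ 0 := by exact_mod_cast hp.out.ne_zero
  refine ⟨(x - y) / p ^ n, by field_simp, fun hdvd ↦ ?_⟩
  have hz : ‖(((x - y) / p ^ n : ℚ) : ℚ_[p])‖ ≤ 1 := by
    rw [Rat.cast_div, norm_div, Rat.cast_pow, Rat.cast_natCast, norm_pow, Padic.norm_p]
    exact div_le_one_of_le₀ h (by positivity)
  have hunit := PadicInt.isUnit_iff.1 (PadicInt.isUnit_den _ hz)
  exact (Nat.Prime.coprime_iff_not_dvd hp.out).1 (PadicInt.norm_natCast_eq_one_iff.1 hunit) hdvd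

theorem sum_Icc_div_two_mul_sub_one_sq {K : Type*} [Field K] (x : K) (k : ℕ) :
    ∑ j ∈ Icc 1 k, x ^ 2 / (2 * (j : K) - 1) ^ 2 = ∑ i ∈ range k, (x / (2 * i + 1)) ^ 2 := by
  rw [← Ico_add_one_right_eq_Icc, sum_Ico_eq_sum_range, Nat.add_sub_cancel]
  refine sum_congr rfl fun i _ ↦ ?_
  rw [div_pow, show (2 * ((1 + i : ℕ) : K) - 1) = 2 * i + 1 by push_cast; ring]

theorem jacobiSym_neg_one_two_mul_add_one (m : ℕ) : jacobiSym (-1) (2 * m + 1) = (-1) ^ m := by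
  rw [jacobiSym.at_neg_one (odd_two_mul_add_one m), ZMod.χ₄_eq_neg_one_pow (by omega),
    show (2 * m + 1) / 2 = m by omega]

theorem binom_diff_cong_general (p : ℕ) (hp : p.Prime) (hp2 : p ≠ 2)
    (a : ℕ) (k : ℕ) (hk : k ≤ (p ^ a - 1) / 2) :
    ratModCast p 3
      ((Nat.choose ((p ^ a - 1) / 2 + k) (2 * k) : ℚ) -
        (Nat.choose (2 * k) k : ℚ) / (-16 : ℚ) ^ k)
      ((-1 : ℚ) ^ ((k : ℤ) - 1) * (jacobiSym (-1) (p ^ a) : ℚ) *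
        (Nat.choose (p ^ a - 1 - 2 * k) ((p ^ a - 1) / 2 - k) : ℚ) *
        ∑ j ∈ Finset.Icc 1 k, (p : ℚ) ^ (2 * a) / (2 * (j : ℚ) - 1) ^ 2) := by
  have := Fact.mk hp
  obtain ⟨m, hm⟩ := (hp.odd_of_ne_two hp2).pow (n := a)
  have hsq : (p : ℚ) ^ (2 * a) = (2 * m + 1) ^ 2 := by
    rw [mul_comm, pow_mul]
    exact_mod_cast congrArg (· ^ 2) hm
  have hsign : (-1 : ℚ) ^ ((k : ℤ) - 1) = -(-1) ^ k := by
    rw [zpow_sub₀ (by norm_num), zpow_natCast, zpow_one, div_neg, div_one]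
  rw [hm] at hk ⊢
  rw [hsq, hsign, jacobiSym_neg_one_two_mul_add_one, sum_Icc_div_two_mul_sub_one_sq,
    show (2 * m + 1 - 1) / 2 = m by omega, show 2 * m + 1 - 1 - 2 * k = 2 * (m - k) by omega]
  apply ratModCast_of_norm_le
  convert Padic.norm_choose_add_two_mul_sub_le hp2 hm.symm (by omega : k ≤ m) using 2
  push_cast
  ring

theorem binom_diff_cong (p : ℕ) (hp : p.Prime) (hp2 : p ≠ 2)
    (a : ℕ) (ha : 0 < a) (k : ℕ) (hk : k ≤ (p ^ a - 1) / 2) :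
    ratModCast p 3
      ((Nat.choose ((p ^ a - 1) / 2 + k) (2 * k) : ℚ) -
        (Nat.choose (2 * k) k : ℚ) / (-16 : ℚ) ^ k)
      ((-1 : ℚ) ^ ((k : ℤ) - 1) * (jacobiSym (-1) (p ^ a) : ℚ) *
        (Nat.choose (p ^ a - 1 - 2 * k) ((p ^ a - 1) / 2 - k) : ℚ) *
        ∑ j ∈ Finset.Icc 1 k, (p : ℚ) ^ (2 * a) / (2 * (j : ℚ) - 1) ^ 2) :=
  binom_diff_cong_general p hp hp2 a k hk
end

section
/- Let p be an odd prime with p ≠ 5 and let a be a positive integer. Then (L_{p^a} − 1)/5 − (p^a/5)·F_{p^a} + 1 ≡ −F_{p^a−(p^a/5)}^2/2 (mod p^4), where the congruence is between rational numbers whose denominators are coprime to p (i.e., it holds in the localization ℤ_(p)). -/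
/-- The Lucas numbers: `L_0 = 2`, `L_1 = 1`, `L_{n+1} = L_n + L_{n−1}`. -/
def lucasNum : ℕ → ℤ
  | 0 => 2
  | 1 => 1
  | n + 2 => lucasNum (n + 1) + lucasNum n

open QuadraticAlgebra

section GoldenRing

variable {R : Type*} [CommRing R]

lemma omega_sq : (ω : QuadraticAlgebra R 1 1) ^ 2 = ω + 1 := by
  ext <;> simp [pow_two]

lemma omega_pow_add_two (n : ℕ) :
    (ω : QuadraticAlgebra R 1 1) ^ (n + 2) = ω ^ (n + 1) + ω ^ n := by
  rw [pow_add, omega_sq]; ring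

lemma im_omega_pow (n : ℕ) : ((ω : QuadraticAlgebra R 1 1) ^ n).im = Nat.fib n := by
  induction n using Nat.twoStepInduction with
  | zero => simp
  | one => simp
  | more n ih₀ ih₁ => rw [omega_pow_add_two, im_add, ih₀, ih₁, Nat.fib_add_two]; push_cast; ring

lemma trace_omega_pow (n : ℕ) : trace ((ω : QuadraticAlgebra R 1 1) ^ n) = lucasNum n := by
  induction n using Nat.twoStepInduction with
  | zero => simp [lucasNum]
  | one => simp [lucasNum, trace_def]
  | more n ih₀ ih₁ => rw [omega_pow_add_two, map_add, ih₀, ih₁, lucasNum]; push_cast; ring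

lemma norm_omega : norm (ω : QuadraticAlgebra R 1 1) = -1 := by
  simp [norm_def]

lemma fib_eq_zero_and_lucasNum_eq_of_omega_pow_eq {n : ℕ} {r : R}
    (h : (ω : QuadraticAlgebra R 1 1) ^ n = algebraMap R _ r) :
    (Nat.fib n : R) = 0 ∧ (lucasNum n : R) = 2 * r := by
  rw [← im_omega_pow, ← trace_omega_pow, h]
  simp

lemma two_mul_omega_sub_one_sq : (2 * ω - 1 : QuadraticAlgebra R 1 1) ^ 2 = 5 := by
  ext <;> simp [pow_two] <;> norm_num

instance {p : ℕ} [CharP R p] {a b : R} : CharP (QuadraticAlgebra R a b) p :=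
  charP_of_injective_algebraMap algebraMap_injective p

end GoldenRing

lemma lucasNum_sq_sub_five_mul_fib_sq (n : ℕ) :
    lucasNum n ^ 2 - 5 * (Nat.fib n : ℤ) ^ 2 = 4 * (-1) ^ n := by
  have key (z : QuadraticAlgebra ℤ 1 1) : trace z ^ 2 - 5 * z.im ^ 2 = 4 * norm z := by
    simp only [trace_def, norm_def]; ring
  rw [← Int.cast_id (n := lucasNum n), ← trace_omega_pow, ← im_omega_pow, key, map_pow,
    norm_omega]

lemma lucasNum_succ_sub_five_mul_fib_succ (n : ℕ) :
    lucasNum (n + 1) - 5 * Nat.fib (n + 1) = -2 * lucasNum n := by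
  rw [← Int.cast_id (n := lucasNum n), ← Int.cast_id (n := lucasNum (n + 1)), ← trace_omega_pow,
    ← im_omega_pow, ← trace_omega_pow, pow_succ']
  simp only [trace_def, re_mul, im_mul, omega_re, omega_im]; ring

lemma lucasNum_add_five_mul_fib (n : ℕ) :
    lucasNum n + 5 * Nat.fib n = 2 * lucasNum (n + 1) := by
  rw [← Int.cast_id (n := lucasNum n), ← Int.cast_id (n := lucasNum (n + 1)), ← trace_omega_pow,
    ← im_omega_pow, ← trace_omega_pow, pow_succ' _ n]
  simp only [trace_def, re_mul, im_mul, omega_re, omega_im]; ring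

lemma lucasNum_fib_difference_eq_sq_div_ten {q m : ℕ} {e : ℤ} (he : e = 1 ∨ e = -1) (hm : Even m)
    (hq : (q : ℤ) = m + e) :
    ((lucasNum q : ℚ) - 1) / 5 - e * Nat.fib q + 1 - (-(Nat.fib m : ℚ) ^ 2 / 2) =
      ((lucasNum m : ℚ) - 2 * e) ^ 2 / 10 := by
  have hlin : lucasNum q - 5 * e * Nat.fib q = -2 * e * lucasNum m := by
    rcases he with rfl | rfl
    · obtain rfl : q = m + 1 := by omega
      linear_combination lucasNum_succ_sub_five_mul_fib_succ m
    · obtain rfl : m = q + 1 := by omega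
      linear_combination lucasNum_add_five_mul_fib q
  have hsq := lucasNum_sq_sub_five_mul_fib_sq m
  rw [hm.neg_one_pow] at hsq
  have he2 : e ^ 2 = 1 := by rcases he with rfl | rfl <;> norm_num
  qify at hlin hsq he2
  linear_combination (2 * hlin - hsq - 4 * he2) / 10

lemma sq_dvd_sub_two_mul_of_sq_sub_mul_sq_eq_four {p : ℕ} (hp : p.Prime) (hp2 : p ≠ 2)
    {d L F e : ℤ} (he : e = 1 ∨ e = -1) (h : L ^ 2 - d * F ^ 2 = 4) (hF : (F : ZMod p) = 0)
    (hL : (L : ZMod p) = 2 * e) : (p : ℤ) ^ 2 ∣ L - 2 * e := by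
  have hp' : Prime (p : ℤ) := Nat.prime_iff_prime_int.mp hp
  have he2 : e ^ 2 = 1 := by rcases he with rfl | rfl <;> norm_num
  have hfac : (L - 2 * e) * (L + 2 * e) = d * F ^ 2 := by linear_combination h - 4 * he2
  have hF' : (p : ℤ) ∣ F := (ZMod.intCast_zmod_eq_zero_iff_dvd F p).mp hF
  have hL' : (p : ℤ) ∣ L - 2 * e :=
    (ZMod.intCast_zmod_eq_zero_iff_dvd _ p).mp (by push_cast; rw [hL, sub_self])
  have hnd : ¬ (p : ℤ) ∣ L + 2 * e := fun hdvd => hp2 <| by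
    have h4 : (p : ℤ) ∣ 2 ^ 2 := by
      have := (dvd_sub hdvd hL').mul_right e
      rwa [show (L + 2 * e - (L - 2 * e)) * e = 2 ^ 2 by linear_combination 4 * he2] at this
    exact (Nat.prime_dvd_prime_iff_eq hp Nat.prime_two).mp
      (Int.natCast_dvd_natCast.mp (hp'.dvd_of_dvd_pow h4))
  exact hp'.pow_dvd_of_dvd_mul_right 2 hnd
    (hfac ▸ dvd_mul_of_dvd_right (pow_dvd_pow_of_dvd hF' 2) d)

lemma ratModCast_of_sub_eq {p n d : ℕ} {x y : ℚ} (k : ℤ) (hd : ¬ p ∣ d)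
    (h : x - y = p ^ n * (k / d)) : ratModCast p n x y := by
  refine ⟨k / d, h, fun hp => hd ?_⟩
  have := Rat.den_dvd k d
  rw [Rat.divInt_eq_div] at this
  push_cast at this
  exact hp.trans (Int.natCast_dvd_natCast.mp this)

section Frobenius

variable {p : ℕ} [Fact p.Prime]

lemma two_mul_omega_sub_one_pow_prime (hp2 : p ≠ 2) :
    (2 * ω - 1 : QuadraticAlgebra (ZMod p) 1 1) ^ p =
      (legendreSym p 5 : QuadraticAlgebra (ZMod p) 1 1) * (2 * ω - 1) := by
  have hp : p = 2 * (p / 2) + 1 :=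
    (Nat.two_mul_div_two_add_one_of_odd ((Fact.out : p.Prime).odd_of_ne_two hp2)).symm
  have h5 : (5 : QuadraticAlgebra (ZMod p) 1 1) = algebraMap (ZMod p) _ 5 := (map_ofNat _ 5).symm
  rw [← map_intCast (algebraMap (ZMod p) (QuadraticAlgebra (ZMod p) 1 1)), legendreSym.eq_pow,
    Int.cast_ofNat, map_pow, ← h5, ← two_mul_omega_sub_one_sq, ← pow_mul, ← pow_succ, ← hp]

lemma two_mul_omega_sub_one_pow_prime_pow (hp2 : p ≠ 2) (a : ℕ) :
    (2 * ω - 1 : QuadraticAlgebra (ZMod p) 1 1) ^ (p ^ a) =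
      (jacobiSym 5 (p ^ a) : QuadraticAlgebra (ZMod p) 1 1) * (2 * ω - 1) := by
  induction a with
  | zero => simp
  | succ a ih =>
    rw [pow_succ, pow_mul, ih, mul_pow, two_mul_omega_sub_one_pow_prime hp2, ← frobenius_def,
      map_intCast, jacobiSym.mul_right, jacobiSym.legendreSym.to_jacobiSym]
    push_cast; ring

lemma two_mul_omega_pow_prime_pow_sub_one (hp2 : p ≠ 2) (a : ℕ) :
    2 * (ω : QuadraticAlgebra (ZMod p) 1 1) ^ (p ^ a) - 1 =
      (jacobiSym 5 (p ^ a) : QuadraticAlgebra (ZMod p) 1 1) * (2 * ω - 1) := by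
  have h := map_sub (iterateFrobenius (QuadraticAlgebra (ZMod p) 1 1) p a) (2 * ω) 1
  rw [map_mul, map_ofNat, map_one, iterateFrobenius_def, iterateFrobenius_def] at h
  rw [← two_mul_omega_sub_one_pow_prime_pow hp2, h]

lemma jacobiSym_five_prime_pow_eq_one_or_neg_one (hp5 : p ≠ 5) (a : ℕ) :
    jacobiSym 5 (p ^ a) = 1 ∨ jacobiSym 5 (p ^ a) = -1 := by
  refine jacobiSym.eq_one_or_neg_one (Nat.Coprime.pow_right a ?_)
  exact (Nat.coprime_primes (by norm_num) Fact.out).mpr hp5.symm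

lemma omega_pow_prime_pow_sub_jacobiSym (hp2 : p ≠ 2) (hp5 : p ≠ 5) {a m : ℕ}
    (hm : (m : ℤ) = (p ^ a : ℕ) - jacobiSym 5 (p ^ a)) :
    (ω : QuadraticAlgebra (ZMod p) 1 1) ^ m = jacobiSym 5 (p ^ a) := by
  have h := two_mul_omega_pow_prime_pow_sub_one hp2 a
  have h2 : IsUnit (2 : QuadraticAlgebra (ZMod p) 1 1) := by
    rw [← map_ofNat (algebraMap (ZMod p) _) 2]
    exact (Ring.two_ne_zero (by rwa [ZMod.ringChar_zmod_n])).isUnit.map _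
  have hsq : (ω : QuadraticAlgebra (ZMod p) 1 1) ^ 2 = ω + 1 := omega_sq
  rcases jacobiSym_five_prime_pow_eq_one_or_neg_one hp5 a with hJ | hJ <;>
    rw [hJ] at h hm ⊢ <;> push_cast at h ⊢
  · have hq : p ^ a = m + 1 := by omega
    have hfix : (ω : QuadraticAlgebra (ZMod p) 1 1) ^ m * ω = ω := by
      rw [← pow_succ, ← hq]
      exact h2.mul_left_cancel (by linear_combination h)
    -- `ω` is a unit with inverse `ω - 1`
    linear_combination (ω - 1) * hfix + (1 - ω ^ m) * hsq
  · have hq : m = p ^ a + 1 := by omega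
    have hconj : (ω : QuadraticAlgebra (ZMod p) 1 1) ^ p ^ a = 1 - ω :=
      h2.mul_left_cancel (by linear_combination h)
    rw [hq, pow_succ, hconj]
    linear_combination -hsq

end Frobenius

lemma jacobiSym_natCast_five {b : ℕ} (hb : Odd b) : jacobiSym b 5 = jacobiSym 5 b :=
  (jacobiSym.quadratic_reciprocity_one_mod_four (a := 5) (by norm_num) hb).symm

theorem lucas_fib_cong_general (p : ℕ) (hp : p.Prime) (hp2 : p ≠ 2) (hp5 : p ≠ 5)
    (a : ℕ) :
    ratModCast p 4
      (((lucasNum (p ^ a) : ℚ) - 1) / 5 -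
          (jacobiSym ((p : ℤ) ^ a) 5 : ℚ) * (Nat.fib (p ^ a) : ℚ) + 1)
      (-(Nat.fib (((p : ℤ) ^ a - jacobiSym ((p : ℤ) ^ a) 5).toNat) : ℚ) ^ 2 / 2) := by
  have := Fact.mk hp
  obtain ⟨k, hk⟩ : Odd (p ^ a) := (hp.odd_of_ne_two hp2).pow
  rw [← Nat.cast_pow, jacobiSym_natCast_five ⟨k, hk⟩]
  set J := jacobiSym 5 (p ^ a)
  have hJ : J = 1 ∨ J = -1 := jacobiSym_five_prime_pow_eq_one_or_neg_one hp5 a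
  obtain ⟨m, hm⟩ : ∃ m : ℕ, (m : ℤ) = (p ^ a : ℕ) - J := ⟨_, Int.toNat_of_nonneg (by omega)⟩
  have hm_even : Even m := by rw [Nat.even_iff]; omega
  rw [show (((p ^ a : ℕ) : ℤ) - J).toNat = m by omega]
  obtain ⟨hF, hL⟩ := fib_eq_zero_and_lucasNum_eq_of_omega_pow_eq
    ((omega_pow_prime_pow_sub_jacobiSym hp2 hp5 hm).trans (map_intCast _ J).symm)
  have hsq : lucasNum m ^ 2 - 5 * (Nat.fib m : ℤ) ^ 2 = 4 := by
    simpa [hm_even.neg_one_pow] using lucasNum_sq_sub_five_mul_fib_sq m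
  obtain ⟨t, ht⟩ := sq_dvd_sub_two_mul_of_sq_sub_mul_sq_eq_four hp hp2 hJ hsq
    (by exact_mod_cast hF) (by exact_mod_cast hL)
  have hp10 : ¬ p ∣ 2 * 5 := fun h10 => (hp.dvd_mul.mp h10).elim
    (fun h => hp2 ((Nat.prime_dvd_prime_iff_eq hp Nat.prime_two).mp h))
    (fun h => hp5 ((Nat.prime_dvd_prime_iff_eq hp (by norm_num)).mp h))
  refine ratModCast_of_sub_eq (t ^ 2) hp10 ?_
  rw [lucasNum_fib_difference_eq_sq_div_ten hJ hm_even (by omega),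
    show (lucasNum m : ℚ) - 2 * J = p ^ 2 * t by exact_mod_cast ht]
  push_cast; ring

theorem lucas_fib_cong (p : ℕ) (hp : p.Prime) (hp2 : p ≠ 2) (hp5 : p ≠ 5)
    (a : ℕ) (ha : 0 < a) :
    ratModCast p 4
      (((lucasNum (p ^ a) : ℚ) - 1) / 5 -
          (jacobiSym ((p : ℤ) ^ a) 5 : ℚ) * (Nat.fib (p ^ a) : ℚ) + 1)
      (-(Nat.fib (((p : ℤ) ^ a - jacobiSym ((p : ℤ) ^ a) 5).toNat) : ℚ) ^ 2 / 2) :=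
  lucas_fib_cong_general p hp hp2 hp5 a
end

section
/- Let p be an odd prime, a a positive integer, and m an integer not divisible by p. Then ∑_{k=0}^{(p^a−1)/2} C(2k,k+1)/m^k ≡ ((m−2)/2)·∑_{k=0}^{(p^a−1)/2} C(2k,k)/m^k − m/2 + 2p·δ_{a,1}·(−m/p) (mod p^2), where δ_{a,1} equals 1 if a = 1 and 0 otherwise, and where the congruence is between rational numbers whose denominators are coprime to p (i.e., it holds in the localization ℤ_(p)). -/
theorem Nat.dvd_choose_of_coprime {n k : ℕ} (hk : k ≠ 0) (h : n.Coprime k) :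
    n ∣ n.choose k := by
  obtain _ | n := n
  · exact (Nat.choose_eq_zero_of_lt (Nat.pos_of_ne_zero hk)).symm ▸ dvd_zero 0
  obtain _ | k := k
  · contradiction
  exact h.dvd_of_dvd_mul_right ⟨_, (Nat.add_one_mul_choose_eq n k).symm⟩

theorem Nat.two_mul_add_one_dvd_choose (n : ℕ) : 2 * n + 1 ∣ (2 * n + 1).choose n := by
  obtain rfl | hn := eq_or_ne n 0
  · simp
  exact Nat.dvd_choose_of_coprime hn (by simp)

theorem Nat.choose_two_mul_add_two_succ (n : ℕ) :
    (2 * n + 2).choose (n + 1) = 2 * (2 * n + 1).choose n := by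
  rw [Nat.choose_succ_succ, ← Nat.choose_symm_half]; ring

theorem sum_range_choose_succ_div_pow {K : Type*} [Field K] (h2 : (2 : K) ≠ 0) {q : K}
    (hq : q ≠ 0) (n : ℕ) :
    ∑ k ∈ Finset.range (n + 1), ((2 * k).choose (k + 1) : K) / q ^ k =
      (q - 2) / 2 * ∑ k ∈ Finset.range (n + 1), ((2 * k).choose k : K) / q ^ k - q / 2
        + ((2 * n + 1).choose n : K) / q ^ n := by
  induction n with
  | zero => simp [field]
  | succ n ih =>
    have pascal : ((2 * n + 3).choose (n + 1) : K) =
        (2 * n + 2).choose (n + 2) + 2 * (2 * n + 1).choose n := by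
      have h1 : (2 * n + 3).choose (n + 1) = (2 * n + 2).choose n + (2 * n + 2).choose (n + 1) :=
        Nat.choose_succ_succ _ _
      have h2 : (2 * n + 2).choose n = (2 * n + 2).choose (n + 2) :=
        Nat.choose_symm_of_eq_add (by ring)
      rw [h1, h2, Nat.choose_two_mul_add_two_succ]; push_cast; ring
    have central : ((2 * n + 2).choose (n + 1) : K) = 2 * (2 * n + 1).choose n := by
      rw [Nat.choose_two_mul_add_two_succ]; push_cast; ring
    rw [Finset.sum_range_succ, ih,
      Finset.sum_range_succ (fun k ↦ ((2 * k).choose k : K) / q ^ k) (n + 1),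
      show 2 * (n + 1) = 2 * n + 2 by ring, show 2 * n + 2 + 1 = 2 * n + 3 by ring,
      central, pascal]
    field_simp
    ring

theorem Nat.Prime.cast_choose_sub_one {p k : ℕ} (hp : p.Prime) (hk : k < p) :
    ((p - 1).choose k : ZMod p) = (-1) ^ k := by
  induction k with
  | zero => simp
  | succ k ih =>
    have pascal : p.choose (k + 1) = (p - 1).choose k + (p - 1).choose (k + 1) := by
      rw [← Nat.choose_succ_succ', Nat.sub_add_cancel hp.one_le]
    have hvanish : (p.choose (k + 1) : ZMod p) = 0 :=
      (ZMod.natCast_eq_zero_iff _ _).mpr (hp.dvd_choose_self k.succ_ne_zero hk)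
    rw [pascal, Nat.cast_add, ih (by omega)] at hvanish
    linear_combination hvanish

theorem Nat.Prime.cast_choose_half_div {p n c : ℕ} (hp : p.Prime) (hn : 2 * n + 1 = p)
    (hc : p.choose n = p * c) : (c : ZMod p) = 2 * (-1) ^ n := by
  obtain _ | n := n
  · exact absurd hn.symm hp.ne_one
  have hchoose : (p - 1).choose n = c * (n + 1) := by
    refine Nat.eq_of_mul_eq_mul_left hp.pos ?_
    have := Nat.add_one_mul_choose_eq (p - 1) n
    rw [Nat.sub_add_cancel hp.one_le, hc] at this
    linarith
  have hcast := hp.cast_choose_sub_one (k := n) (by omega)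
  have hp0 : ((2 * (n + 1) + 1 : ℕ) : ZMod p) = 0 := by rw [hn, ZMod.natCast_self]
  rw [hchoose] at hcast
  push_cast at hcast hp0
  linear_combination (-2) * hcast + (c : ZMod p) * hp0

theorem jacobiSym_neg_mul_pow_half {p n : ℕ} (hp : p.Prime) (hn : 2 * n + 1 = p) {m : ℤ}
    (hm : ¬ (p : ℤ) ∣ m) : ((jacobiSym (-m) p : ℤ) : ZMod p) * (m : ZMod p) ^ n = (-1) ^ n := by
  have := Fact.mk hp
  have hm0 : (m : ZMod p) ≠ 0 := by rwa [Ne, ZMod.intCast_zmod_eq_zero_iff_dvd]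
  have fermat : (m : ZMod p) ^ (2 * n) = 1 := by
    rw [show 2 * n = p - 1 by omega]; exact ZMod.pow_card_sub_one_eq_one hm0
  rw [← jacobiSym.legendreSym.to_jacobiSym, legendreSym.eq_pow, show p / 2 = n by omega]
  push_cast
  rw [neg_pow, mul_assoc, ← pow_add, ← two_mul, fermat, mul_one]

theorem sq_dvd_choose_prime_half_sub {p n : ℕ} (hp : p.Prime) (hn : 2 * n + 1 = p) {m : ℤ}
    (hm : ¬ (p : ℤ) ∣ m) :
    (p : ℤ) ^ 2 ∣ p.choose n - 2 * p * jacobiSym (-m) p * m ^ n := by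
  obtain ⟨c, hc⟩ := hp.dvd_choose_self (k := n) (by rintro rfl; exact hp.ne_one hn.symm)
    (by omega)
  have hquot : (p : ℤ) ∣ c - 2 * jacobiSym (-m) p * m ^ n := by
    rw [← ZMod.intCast_zmod_eq_zero_iff_dvd]
    push_cast
    rw [hp.cast_choose_half_div hn hc]
    linear_combination (-2) * jacobiSym_neg_mul_pow_half hp hn hm
  obtain ⟨t, ht⟩ := hquot
  exact ⟨t, by rw [hc]; push_cast; linear_combination (p : ℤ) * ht⟩

theorem two_mul_prime_pow_half_add_one {p : ℕ} (hp : p.Prime) (hp2 : p ≠ 2) (a : ℕ) :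
    2 * ((p ^ a - 1) / 2) + 1 = p ^ a := by
  obtain ⟨j, hj⟩ := (hp.odd_of_ne_two hp2).pow (n := a)
  omega

theorem sq_dvd_choose_prime_pow_half_sub {p a : ℕ} (hp : p.Prime) (hp2 : p ≠ 2) (ha : 0 < a)
    {m : ℤ} (hm : ¬ (p : ℤ) ∣ m) :
    (p : ℤ) ^ 2 ∣ (p ^ a).choose ((p ^ a - 1) / 2)
      - 2 * p * (if a = 1 then 1 else 0) * jacobiSym (-m) p * m ^ ((p ^ a - 1) / 2) := by
  have hn := two_mul_prime_pow_half_add_one hp hp2 a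
  obtain rfl | ha1 := eq_or_ne a 1
  · rw [pow_one] at hn ⊢
    simpa using sq_dvd_choose_prime_half_sub hp hn hm
  rw [if_neg ha1, mul_zero, zero_mul, zero_mul, sub_zero]
  have hsq : p ^ 2 ∣ (p ^ a).choose ((p ^ a - 1) / 2) :=
    (Nat.pow_dvd_pow p (by omega)).trans (hn ▸ Nat.two_mul_add_one_dvd_choose _)
  exact_mod_cast hsq

theorem ratModCast_of_sub_eq_div {p n k : ℕ} (hp : p.Prime) {m c : ℤ} (hm : ¬ (p : ℤ) ∣ m)
    (hc : (p : ℤ) ^ n ∣ c) {x y : ℚ} (h : x - y = c / (m : ℚ) ^ k) : ratModCast p n x y := by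
  obtain ⟨t, rfl⟩ := hc
  refine ⟨t / (m : ℚ) ^ k, by rw [h]; push_cast; ring, fun hden ↦ hm ?_⟩
  have hden' : ((t / (m : ℚ) ^ k).den : ℤ) ∣ m ^ k := by
    simpa [Rat.divInt_eq_div] using Rat.den_dvd t (m ^ k)
  exact (Nat.prime_iff_prime_int.mp hp).dvd_of_dvd_pow
    ((Int.natCast_dvd_natCast.mpr hden).trans hden')

theorem sum_choose_succ_div_m (p : ℕ) (hp : p.Prime) (hp2 : p ≠ 2)
    (a : ℕ) (ha : 0 < a) (m : ℤ) (hm : ¬ ((p : ℤ) ∣ m)) :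
    ratModCast p 2
      (∑ k ∈ Finset.range ((p ^ a - 1) / 2 + 1),
        (Nat.choose (2 * k) (k + 1) : ℚ) / (m : ℚ) ^ k)
      (((m : ℚ) - 2) / 2 *
          ∑ k ∈ Finset.range ((p ^ a - 1) / 2 + 1),
            (Nat.choose (2 * k) k : ℚ) / (m : ℚ) ^ k
        - (m : ℚ) / 2
        + 2 * p * (if a = 1 then (1 : ℚ) else 0) * (jacobiSym (-m) p : ℚ)) := by
  have hm0 : (m : ℚ) ≠ 0 := Int.cast_ne_zero.mpr (by rintro rfl; exact hm (dvd_zero _))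
  refine ratModCast_of_sub_eq_div (k := (p ^ a - 1) / 2) hp hm
    (sq_dvd_choose_prime_pow_half_sub hp hp2 ha hm) ?_
  rw [sum_range_choose_succ_div_pow two_ne_zero hm0, two_mul_prime_pow_half_add_one hp hp2]
  push_cast
  field_simp
  ring
end

section
/- For every integer m and every natural number n, ∑_{k=0}^{n} (2 − (m−4)·k)·C(2k,k)·m^{n−k} = 2·(2n+1)·C(2n,n); equivalently, for m ≠ 0, ∑_{k=0}^{n} (1 − ((m−4)/2)·k)·C(2k,k)/m^k = (2n+1)·C(2n,n)/m^n. -/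
/-!
Write `S n = ∑_{k ≤ n} (2 - (m - 4) k) C(2k, k) m^(n-k)`. Then `S (n + 1) = m S n + t (n + 1)` with
`t` the new top term, and `(n + 1) C(2n+2, n+1) = 2 (2n + 1) C(2n, n)` shows that `2 (2n + 1) C(2n, n)`
satisfies the same recursion, with no division, so the identity holds in every commutative ring.
The rational form is the integer one divided by `2 m^n`.
-/

theorem Finset.sum_range_succ_mul_pow_sub {R : Type*} [CommSemiring R] (f : ℕ → R) (m : R) (n : ℕ) :
    ∑ k ∈ range (n + 2), f k * m ^ (n + 1 - k) = m * ∑ k ∈ range (n + 1), f k * m ^ (n - k) + f (n + 1) := by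
  rw [sum_range_succ, Nat.sub_self, pow_zero, mul_one, mul_sum]
  congr 1
  refine sum_congr rfl fun k hk => ?_
  rw [Nat.sub_add_comm (Nat.le_of_lt_succ (mem_range.mp hk)), pow_succ]
  ring

theorem sum_centralBinom_mul_pow_sub {R : Type*} [CommRing R] (m : R) (n : ℕ) :
    ∑ k ∈ Finset.range (n + 1), (2 - (m - 4) * k) * (k.centralBinom : R) * m ^ (n - k)
      = 2 * (2 * n + 1) * n.centralBinom := by
  induction n with
  | zero => simp
  | succ n ih =>
    have hstep := congrArg (Nat.cast : ℕ → R) (Nat.succ_mul_centralBinom_succ n)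
    push_cast at hstep
    rw [Finset.sum_range_succ_mul_pow_sub, ih]
    push_cast
    linear_combination -m * hstep

theorem sum_centralBinom_div_pow {K : Type*} [Field K] [CharZero K] {m : K} (hm : m ≠ 0) (n : ℕ) :
    ∑ k ∈ Finset.range (n + 1), (1 - (m - 4) / 2 * k) * (k.centralBinom : K) / m ^ k
      = (2 * n + 1) * n.centralBinom / m ^ n := by
  have hterm : ∀ k ∈ Finset.range (n + 1), (1 - (m - 4) / 2 * k) * (k.centralBinom : K) / m ^ k
      = (2 - (m - 4) * k) * (k.centralBinom : K) * m ^ (n - k) / (2 * m ^ n) := by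
    intro k hk
    rw [pow_sub₀ m hm (Nat.le_of_lt_succ (Finset.mem_range.mp hk))]
    field_simp
  rw [Finset.sum_congr rfl hterm, ← Finset.sum_div, sum_centralBinom_mul_pow_sub]
  field_simp

theorem central_binom_identity (m : ℤ) (n : ℕ) :
    (∑ k ∈ Finset.range (n + 1),
        (2 - (m - 4) * k) * (Nat.choose (2 * k) k : ℤ) * m ^ (n - k)
      = 2 * (2 * n + 1) * (Nat.choose (2 * n) n : ℤ)) ∧
    (m ≠ 0 →
      ∑ k ∈ Finset.range (n + 1),
          (1 - ((m : ℚ) - 4) / 2 * k) * (Nat.choose (2 * k) k : ℚ) / (m : ℚ) ^ k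
        = (2 * n + 1) * (Nat.choose (2 * n) n : ℚ) / (m : ℚ) ^ n) := by
  simp only [← Nat.centralBinom_eq_two_mul_choose]
  exact ⟨sum_centralBinom_mul_pow_sub m n,
    fun hm => sum_centralBinom_div_pow (Int.cast_ne_zero.mpr hm) n⟩
end

section
/- Let p be an odd prime, a a positive integer, and m an integer not divisible by p. Then ((m−4)/2)·∑_{k=0}^{(p^a−1)/2} k·C(2k,k)/m^k ≡ ∑_{k=0}^{(p^a−1)/2} C(2k,k)/m^k − p^a·(−m/p^a) (mod p^{a+1}), where the congruence is between rational numbers whose denominators are coprime to p (i.e., it holds in the localization ℤ_(p)). -/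
open Finset

theorem sum_choose_div_pow_sub_mul_sum {K : Type*} [Field K] [CharZero K] (x : K) (hx : x ≠ 0)
    (n : ℕ) :
    ∑ k ∈ range (n + 1), (Nat.choose (2 * k) k : K) / x ^ k
      - (x - 4) / 2 * ∑ k ∈ range (n + 1), (k : K) * (Nat.choose (2 * k) k : K) / x ^ k
    = (2 * n + 1) * (Nat.choose (2 * n) n : K) / x ^ n := by
  induction n with
  | zero => simp
  | succ n ih =>
    have hrec : ((n : K) + 1) * (Nat.choose (2 * (n + 1)) (n + 1) : K)
        = 2 * (2 * n + 1) * (Nat.choose (2 * n) n : K) := by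
      exact_mod_cast Nat.succ_mul_centralBinom_succ n
    have hstep : (x - 4) / 2 * (2 * (2 * n + 1) * (Nat.choose (2 * n) n : K)) / x ^ (n + 1)
        = (2 * n + 1) * (Nat.choose (2 * n) n : K) / x ^ n
          - 4 * (2 * n + 1) * (Nat.choose (2 * n) n : K) / x ^ (n + 1) := by
      field_simp
      ring
    rw [sum_range_succ, sum_range_succ (fun k => (k : K) * _ / _)]
    push_cast
    linear_combination ih - x / 2 / x ^ (n + 1) * hrec - hstep

theorem ZMod.choose_prime_pow_sub_one (p : ℕ) [Fact p.Prime] (a : ℕ) {k : ℕ} (hk : k < p ^ a) :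
    (Nat.choose (p ^ a - 1) k : ZMod p) = (-1) ^ k := by
  induction k with
  | zero => simp
  | succ k ih =>
    have hpa : p ^ a - 1 + 1 = p ^ a := Nat.sub_add_cancel NeZero.one_le
    -- `C(p^a, k + 1) ≡ 0` for `0 < k + 1 < p^a`, so Pascal's rule flips the sign.
    have hzero : (Nat.choose (p ^ a) (k + 1) : ZMod p) = 0 :=
      (ZMod.natCast_eq_zero_iff _ _).mpr
        (Nat.Prime.dvd_choose_pow Fact.out k.succ_ne_zero hk.ne)
    rw [← hpa, Nat.choose_succ_succ, Nat.cast_add, ih (by omega)] at hzero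
    rw [pow_succ, mul_neg_one]
    exact eq_neg_of_add_eq_zero_right hzero

theorem ZMod.pow_prime_pow_sub_one_div_two {p : ℕ} [Fact p.Prime] (hp : Odd p) (x : ZMod p)
    (a : ℕ) : x ^ ((p ^ a - 1) / 2) = (x ^ (p / 2)) ^ a := by
  induction a with
  | zero => simp
  | succ a ih =>
    obtain ⟨u, hu⟩ := hp.pow (n := a)
    obtain ⟨v, hv⟩ := hp
    have hsplit : (p ^ (a + 1) - 1) / 2 = p * ((p ^ a - 1) / 2) + p / 2 := by
      have : p ^ (a + 1) = 2 * (p * u + v) + 1 := by rw [pow_succ', hu, hv]; ring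
      rw [show (p ^ a - 1) / 2 = u by omega, show p / 2 = v by omega]
      omega
    rw [hsplit, pow_add, pow_mul, ZMod.pow_card, ih, pow_succ]

theorem jacobiSym_prime_pow_eq_pow {p : ℕ} [Fact p.Prime] (hp : p ≠ 2) (x : ℤ) (a : ℕ) :
    (jacobiSym x (p ^ a) : ZMod p) = (x : ZMod p) ^ ((p ^ a - 1) / 2) := by
  rw [jacobiSym.pow_right, ← jacobiSym.legendreSym.to_jacobiSym, Int.cast_pow,
    legendreSym.eq_pow, ZMod.pow_prime_pow_sub_one_div_two (Nat.Prime.odd_of_ne_two Fact.out hp)]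

theorem jacobiSym_neg_mul_pow_eq_choose {p : ℕ} [Fact p.Prime] (hp : p ≠ 2) {a n : ℕ}
    (hn : 2 * n + 1 = p ^ a) {m : ℤ} (hm : (m : ZMod p) ≠ 0) :
    (jacobiSym (-m) (p ^ a) : ZMod p) * (m : ZMod p) ^ n = (Nat.choose (2 * n) n : ZMod p) := by
  have hhalf : (p ^ a - 1) / 2 = n := by omega
  have hfermat : (m : ZMod p) ^ (2 * n) = 1 := by
    have h := ZMod.pow_card_pow (n := a) (m : ZMod p)
    rwa [← hn, pow_succ, mul_eq_right₀ hm] at h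
  rw [jacobiSym_prime_pow_eq_pow hp, hhalf, show 2 * n = p ^ a - 1 by omega,
    ZMod.choose_prime_pow_sub_one p a (by omega), Int.cast_neg, neg_pow, mul_assoc, ← pow_add,
    ← two_mul, hfermat, mul_one]

theorem ratModCast_of_sub_eq_mul_div_s16 {p k : ℕ} {x y : ℚ} {d : ℤ}
    (hd : ¬ (p : ℤ) ∣ d) (e : ℤ) (h : x - y = (p : ℚ) ^ k * (e / d)) : ratModCast p k x y := by
  refine ⟨e / d, h, fun hden => hd ?_⟩
  have hden_dvd : ((e / d : ℚ).den : ℤ) ∣ d := by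
    simpa only [Rat.divInt_eq_div] using Rat.den_dvd e d
  exact (Int.natCast_dvd_natCast.mpr hden).trans hden_dvd

theorem sum_mul_central_binom_half_general (p : ℕ) (hp : p.Prime) (hp2 : p ≠ 2)
    (a : ℕ) (m : ℤ) (hm : ¬ ((p : ℤ) ∣ m)) :
    ratModCast p (a + 1)
      (((m : ℚ) - 4) / 2 *
        ∑ k ∈ Finset.range ((p ^ a - 1) / 2 + 1),
          (k : ℚ) * (Nat.choose (2 * k) k : ℚ) / (m : ℚ) ^ k)
      ((∑ k ∈ Finset.range ((p ^ a - 1) / 2 + 1),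
          (Nat.choose (2 * k) k : ℚ) / (m : ℚ) ^ k)
        - (p : ℚ) ^ a * (jacobiSym (-m) (p ^ a) : ℚ)) := by
  have : Fact p.Prime := ⟨hp⟩
  set n := (p ^ a - 1) / 2
  have hn : 2 * n + 1 = p ^ a := by
    have := (hp.odd_of_ne_two hp2).pow (n := a)
    grind
  have hm0 : (m : ℚ) ≠ 0 := Int.cast_ne_zero.mpr (by rintro rfl; exact hm (dvd_zero _))
  obtain ⟨e, he⟩ : (p : ℤ) ∣ jacobiSym (-m) (p ^ a) * m ^ n - Nat.choose (2 * n) n := by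
    rw [← ZMod.intCast_zmod_eq_zero_iff_dvd, Int.cast_sub, Int.cast_mul, Int.cast_pow,
      Int.cast_natCast, jacobiSym_neg_mul_pow_eq_choose hp2 hn
        (by rwa [Ne, ZMod.intCast_zmod_eq_zero_iff_dvd]), sub_self]
  have hdiff : (jacobiSym (-m) (p ^ a) : ℚ) - Nat.choose (2 * n) n / (m : ℚ) ^ n
      = p * (e / (m : ℚ) ^ n) := by
    have he' : (jacobiSym (-m) (p ^ a) : ℚ) * (m : ℚ) ^ n - Nat.choose (2 * n) n = p * e := by
      exact_mod_cast he
    field_simp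
    linear_combination he'
  have hn' : (2 * n + 1 : ℚ) = (p : ℚ) ^ a := by exact_mod_cast hn
  refine ratModCast_of_sub_eq_mul_div_s16 (d := m ^ n) (mt (Int.Prime.dvd_pow' hp) hm) e ?_
  rw [Int.cast_pow]
  linear_combination -sum_choose_div_pow_sub_mul_sum (m : ℚ) hm0 n + (p : ℚ) ^ a * hdiff
    - Nat.choose (2 * n) n / (m : ℚ) ^ n * hn'

theorem sum_mul_central_binom_half (p : ℕ) (hp : p.Prime) (hp2 : p ≠ 2)
    (a : ℕ) (ha : 0 < a) (m : ℤ) (hm : ¬ ((p : ℤ) ∣ m)) :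
    ratModCast p (a + 1)
      (((m : ℚ) - 4) / 2 *
        ∑ k ∈ Finset.range ((p ^ a - 1) / 2 + 1),
          (k : ℚ) * (Nat.choose (2 * k) k : ℚ) / (m : ℚ) ^ k)
      ((∑ k ∈ Finset.range ((p ^ a - 1) / 2 + 1),
          (Nat.choose (2 * k) k : ℚ) / (m : ℚ) ^ k)
        - (p : ℚ) ^ a * (jacobiSym (-m) (p ^ a) : ℚ)) :=
  sum_mul_central_binom_half_general p hp hp2 a m hm
end
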